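/- Let V ⊆ ℝ^n be a regular space with capacity c, f a feasible flow, P a shortest augmenting r-path for f, and g the feasible flow obtained from f by maximal augmentation along P. If Q is a shortest augmenting r-path for g, then |Q| > |P| if and only if Q is not a shortest augmenting path for f. -/

import Mathlib

open Finset

variable {n : ℕ}

/-- The support of a vector. -/
def supp (x : Fin n → ℝ) : Set (Fin n) := {j | x j ≠ 0}

/-- A nonzero vector of `V` is elementary if no nonzero vector of `V` has support
properly contained in its support. -/
def IsElementary (V : Submodule ℝ (Fin n → ℝ)) (x : Fin n → ℝ) : Prop :=
  x ∈ V ∧ x ≠ 0 ∧ ∀ y ∈ V, y ≠ 0 → ¬ (supp y ⊂ supp x)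

/-- A primitive vector: elementary with entries in `{-1, 0, 1}`. -/
def IsPrimitive (V : Submodule ℝ (Fin n → ℝ)) (x : Fin n → ℝ) : Prop :=
  IsElementary V x ∧ ∀ j, x j ∈ ({-1, 0, 1} : Set ℝ)

/-- `y` conforms to `x`. -/
def Conforms (y x : Fin n → ℝ) : Prop := ∀ j, y j ≠ 0 → y j * x j > 0

/-- A regular space: the kernel of a totally unimodular matrix. -/
def IsRegularSpace (V : Submodule ℝ (Fin n → ℝ)) : Prop :=
  ∃ (m : ℕ) (A : Matrix (Fin m) (Fin n) ℝ),
    A.IsTotallyUnimodular ∧ V = LinearMap.ker A.mulVecLin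

/-- An `r`-path: a primitive vector with value `+1` at `r`. -/
def IsRPath (V : Submodule ℝ (Fin n → ℝ)) (r : Fin n) (P : Fin n → ℝ) : Prop :=
  IsPrimitive V P ∧ P r = 1

/-- Feasibility with respect to capacity `c` (no constraint at `r`). -/
def Feasible (c : Fin n → ℝ) (r : Fin n) (f : Fin n → ℝ) : Prop :=
  ∀ j, j ≠ r → 0 ≤ f j ∧ f j ≤ c j

/-- An `r`-path `P` is augmenting for the flow `f`. -/
def Augmenting (V : Submodule ℝ (Fin n → ℝ)) (c : Fin n → ℝ) (r : Fin n)
    (f P : Fin n → ℝ) : Prop :=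
  IsRPath V r P ∧ ∃ ε : ℝ, 0 < ε ∧ Feasible c r (f + ε • P)

/-- The 1-norm. -/
def onorm (x : Fin n → ℝ) : ℝ := ∑ j, |x j|

/-- A shortest augmenting `r`-path. -/
def ShortestAug (V : Submodule ℝ (Fin n → ℝ)) (c : Fin n → ℝ) (r : Fin n)
    (f P : Fin n → ℝ) : Prop :=
  Augmenting V c r f P ∧ ∀ Q, Augmenting V c r f Q → onorm P ≤ onorm Q

/-- `g` is obtained from `f` by maximal augmentation along `P`. -/
def MaxAug (c : Fin n → ℝ) (r : Fin n) (f P g : Fin n → ℝ) : Prop :=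
  ∃ ε : ℝ, 0 < ε ∧ g = f + ε • P ∧ Feasible c r g ∧
    ∀ ε' : ℝ, ε < ε' → ¬ Feasible c r (f + ε' • P)

/-- A conformal primitive decomposition of `P + Q` in which `M` and `J` are the two
`r`-path summands (`M` playing the role of `P ∧ Q` and `J` of `P ∨ Q`). -/
def MeetJoinDecomp (V : Submodule ℝ (Fin n → ℝ)) (r : Fin n)
    (P Q M J : Fin n → ℝ) : Prop :=
  ∃ (k : ℕ) (p : Fin k → Fin n → ℝ) (a b : Fin k),
    (∀ i, IsPrimitive V (p i)) ∧ (∀ i, Conforms (p i) (P + Q)) ∧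
    (∑ i, p i) = P + Q ∧ a ≠ b ∧ p a = M ∧ p b = J ∧
    p a r = 1 ∧ p b r = 1 ∧ ∀ i, p i r = 1 → i = a ∨ i = b

/-! Since `P` and `Q` have entries in `{-1, 0, 1}`, the integer vector `P + Q` of the regular
space `V` is a conformal sum of primitive vectors; primitivity of the summands comes from Cramer's
rule for totally unimodular systems. Counted with their `r`-entry, exactly two summands are
`r`-paths, and each is augmenting for `f`: a coordinate blocking it for `f` would block `P`, or,
where `P` vanishes and `f` and `g` agree, `Q`. As `P` is shortest, `2|P| ≤ |P + Q| ≤ |P| + |Q|`, so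
`|P| ≤ |Q|`. If `|P| = |Q|`, equality in the triangle inequality makes `Q` conform to `P + Q`, so
`Q` is augmenting, hence shortest, for `f`. -/

lemma Ring.inverse_signType_cast {R : Type*} [CommRing R] (s : SignType) :
    Ring.inverse (s : R) = s := by
  cases s
  · simp
  · simpa using Ring.inverse_unit (-1 : Rˣ)
  · simp

namespace Matrix

variable {ι κ R K : Type*} [Fintype κ] [DecidableEq κ]

lemma IsTotallyUnimodular.adjugate_apply_mem [CommRing R] {C : Matrix κ κ R}
    (hC : C.IsTotallyUnimodular) (i j : κ) : C.adjugate i j ∈ Set.range SignType.cast := by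
  have hCI := (fromRows_one_isTotallyUnimodular_iff C).mpr hC
  have hupd : C.updateRow j (Pi.single i 1) =
      (fromRows C 1).submatrix (Function.update Sum.inl j (Sum.inr i)) id := by
    ext k l
    by_cases hk : k = j
    · subst hk; simp [one_apply, Pi.single_apply, eq_comm]
    · simp [hk]
  rw [adjugate_apply, hupd]
  exact (isTotallyUnimodular_iff_fintype _).mp hCI κ _ _

lemma IsTotallyUnimodular.inv_apply_mem [CommRing R] {C : Matrix κ κ R}
    (hC : C.IsTotallyUnimodular) (i j : κ) : C⁻¹ i j ∈ Set.range SignType.cast := by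
  obtain ⟨d, hd⟩ : C.det ∈ Set.range SignType.cast := by
    simpa using (isTotallyUnimodular_iff_fintype C).mp hC κ id id
  obtain ⟨a, ha⟩ := hC.adjugate_apply_mem i j
  exact ⟨d * a, by simp [inv_def, ← hd, ← ha, Ring.inverse_signType_cast]⟩

lemma exists_injective_isUnit_submatrix [Finite ι] [Field K] {B : Matrix ι κ K}
    (hB : Function.Injective B.mulVec) :
    ∃ F : κ → ι, F.Injective ∧ IsUnit (B.submatrix F id) := by
  have hspan : Submodule.span K (Set.range B.row) = ⊤ := by
    apply Submodule.eq_top_of_finrank_eq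
    rw [← rank_eq_finrank_span_row, rank, LinearMap.finrank_range_of_inj hB]
  obtain ⟨κ', a, ha, hspan', hli⟩ := exists_linearIndependent' K B.row
  let e : κ' ≃ κ := (Module.Basis.mk hli (by rw [hspan', hspan])).indexEquiv (Pi.basisFun K κ)
  refine ⟨a ∘ e.symm, ha.comp e.symm.injective, ?_⟩
  exact linearIndependent_rows_iff_isUnit.mp (hli.comp e.symm e.symm.injective)

lemma IsTotallyUnimodular.apply_mem_of_mulVec_eq_single [Finite ι] [DecidableEq ι] [Field K]
    {B : Matrix ι κ K} (hB : B.IsTotallyUnimodular) (hinj : Function.Injective B.mulVec)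
    {z : κ → K} {i : ι} {s : K} (hs : s ∈ Set.range SignType.cast)
    (hz : B *ᵥ z = Pi.single i s) (k : κ) : z k ∈ Set.range SignType.cast := by
  obtain ⟨F, hF, hC⟩ := exists_injective_isUnit_submatrix hinj
  set C := B.submatrix F id
  have hCz : C *ᵥ z = Pi.single i s ∘ F := by
    rw [← hz]; ext; simp [C, mulVec, dotProduct]
  have hzC : z = C⁻¹ *ᵥ (Pi.single i s ∘ F) := by
    rw [← hCz, mulVec_mulVec, nonsing_inv_mul C ((isUnit_iff_isUnit_det C).mp hC), one_mulVec]
  by_cases hi : ∃ l, F l = i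
  · obtain ⟨l, rfl⟩ := hi
    have hsingle : Pi.single (F l) s ∘ F = Pi.single l s := by
      ext l'; simp [Pi.single_apply, hF.eq_iff]
    obtain ⟨a, ha⟩ := (hB.submatrix F id).inv_apply_mem k l
    obtain ⟨b, hb⟩ := hs
    refine ⟨a * b, ?_⟩
    rw [hzC, hsingle, mulVec_single]
    simp [C, ha, hb]
  · simp only [not_exists] at hi
    have hzero : Pi.single i s ∘ F = 0 := by
      ext l; simp [hi l]
    exact ⟨0, by simp [hzC, hzero]⟩

end Matrix

open Matrix

section Conformal

lemma conforms_iff {y x : Fin n → ℝ} :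
    Conforms y x ↔ ∀ j, (x j = 0 → y j = 0) ∧ 0 ≤ y j * x j := by
  refine ⟨fun h j => ⟨fun hx => by_contra fun hy => by simpa [hx] using h j hy, ?_⟩,
    fun h j hy => ?_⟩
  · by_cases hy : y j = 0
    · simp [hy]
    · exact (h j hy).le
  · exact (h j).2.lt_of_ne' (mul_ne_zero hy fun hx => hy ((h j).1 hx))

lemma conforms_refl (x : Fin n → ℝ) : Conforms x x :=
  fun _ hx => mul_self_pos.mpr hx

lemma conforms_smul_left {t : ℝ} (ht : 0 < t) (x : Fin n → ℝ) : Conforms (t • x) x := by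
  intro j hj
  have hx : x j ≠ 0 := by rintro h; simp [h] at hj
  simpa [mul_assoc] using mul_pos ht (mul_self_pos.mpr hx)

lemma Conforms.trans {y z x : Fin n → ℝ} (hyz : Conforms y z) (hzx : Conforms z x) :
    Conforms y x := by
  intro j hy
  have h1 := hyz j hy
  have h2 := hzx j (by rintro h; simp [h] at h1)
  have := mul_pos h1 h2
  have hz : 0 < z j * z j := mul_self_pos.mpr (by rintro h; simp [h] at h1)
  nlinarith

lemma Conforms.supp_subset {y x : Fin n → ℝ} (h : Conforms y x) : supp y ⊆ supp x :=
  fun j hy hx => by simpa [hx] using h j hy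

lemma Conforms.abs_eq_mul_sign {y x : Fin n → ℝ} (h : Conforms y x) (j : Fin n) :
    |y j| = y j * SignType.sign (x j) := by
  rcases eq_or_ne (y j) 0 with hy | hy
  · simp [hy]
  rcases lt_or_gt_of_ne hy with hneg | hpos
  · have : x j < 0 := by nlinarith [h j hy]
    simp [abs_of_neg hneg, this]
  · have : 0 < x j := by nlinarith [h j hy]
    simp [abs_of_pos hpos, this]

lemma onorm_nonneg (x : Fin n → ℝ) : 0 ≤ onorm x :=
  Finset.sum_nonneg fun _ _ => abs_nonneg _

lemma onorm_add_le (x y : Fin n → ℝ) : onorm (x + y) ≤ onorm x + onorm y := by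
  simp only [onorm, ← Finset.sum_add_distrib]
  exact Finset.sum_le_sum fun j _ => abs_add_le _ _

lemma sum_onorm_of_conforms {k : ℕ} {p : Fin k → Fin n → ℝ}
    (hp : ∀ i, Conforms (p i) (∑ i, p i)) : ∑ i, onorm (p i) = onorm (∑ i, p i) := by
  set x := ∑ i, p i
  calc ∑ i, onorm (p i) = ∑ j, ∑ i, p i j * SignType.sign (x j) := by
        simp only [onorm, (hp _).abs_eq_mul_sign]
        exact Finset.sum_comm
    _ = ∑ j, x j * SignType.sign (x j) := by
        simp only [← Finset.sum_mul, x, Finset.sum_apply]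
    _ = onorm x := by simp only [onorm, self_mul_sign]

lemma conforms_sub_of_abs_le {p x : Fin n → ℝ} (hpx : supp p ⊆ supp x)
    (hle : ∀ j, |p j| ≤ |x j|) : Conforms (x - p) x := by
  refine conforms_iff.mpr fun j => ⟨fun hx => ?_, ?_⟩
  · have hp : p j = 0 := by_contra fun h => hpx h hx
    simp [hx, hp]
  · have hpx : p j * x j ≤ x j * x j := by
      calc p j * x j ≤ |p j| * |x j| := by rw [← abs_mul]; exact le_abs_self _
        _ ≤ |x j| * |x j| := mul_le_mul_of_nonneg_right (hle j) (abs_nonneg _)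
        _ = x j * x j := abs_mul_abs_self _
    simp only [Pi.sub_apply, sub_mul]
    linarith

lemma Conforms.onorm_sub {p x : Fin n → ℝ} (hp : Conforms p x) (hxp : Conforms (x - p) x) :
    onorm (x - p) = onorm x - onorm p := by
  unfold onorm
  rw [← Finset.sum_sub_distrib]
  refine Finset.sum_congr rfl fun j _ => ?_
  rw [hxp.abs_eq_mul_sign, hp.abs_eq_mul_sign, (conforms_refl x).abs_eq_mul_sign, Pi.sub_apply]
  ring

lemma conforms_add_of_onorm_add_eq {x y : Fin n → ℝ} (h : onorm (x + y) = onorm x + onorm y) :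
    Conforms y (x + y) := by
  intro j hj
  have hj' : |x j + y j| = |x j| + |y j| :=
    (Finset.sum_eq_sum_iff_of_le fun j _ => abs_add_le (x j) (y j)).mp
      (by simpa [onorm, Finset.sum_add_distrib] using h) j (Finset.mem_univ j)
  have := mul_self_pos.mpr hj
  rcases (abs_add_eq_add_abs_iff _ _).mp hj' with ⟨h1, h2⟩ | ⟨h1, h2⟩ <;>
    simp only [Pi.add_apply] <;> nlinarith

end Conformal

section Elementary

variable {V : Submodule ℝ (Fin n → ℝ)}

lemma supp_smul {t : ℝ} (ht : t ≠ 0) (x : Fin n → ℝ) : supp (t • x) = supp x := by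
  ext j
  simp [supp, ht]

lemma IsElementary.smul {x : Fin n → ℝ} (hx : IsElementary V x) {t : ℝ} (ht : t ≠ 0) :
    IsElementary V (t • x) :=
  ⟨V.smul_mem t hx.1, smul_ne_zero ht hx.2.1, by rw [supp_smul ht]; exact hx.2.2⟩

lemma IsElementary.exists_eq_smul {y v : Fin n → ℝ} (hy : IsElementary V y) (hv : v ∈ V)
    (hvy : supp v ⊆ supp y) : ∃ t : ℝ, v = t • y := by
  obtain ⟨j, hj⟩ : ∃ j, y j ≠ 0 := Function.ne_iff.mp hy.2.1
  set w := v - (v j / y j) • y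
  have hsub : supp w ⊆ supp y := fun i hi hyi =>
    hi (by simp [w, hyi, show v i = 0 from by_contra fun h => hvy h hyi])
  have hss : supp w ⊂ supp y :=
    (Set.ssubset_iff_of_subset hsub).mpr ⟨j, hj, by simp [w, supp, div_mul_cancel₀ _ hj]⟩
  exact ⟨v j / y j, sub_eq_zero.mp <|
    by_contra fun hw => hy.2.2 w (V.sub_mem hv (V.smul_mem _ hy.1)) hw hss⟩

/-- Ratio test: `t = x j₀ / w j₀`, with `|x j₀ / w j₀|` minimal over the support of `w`. -/
lemma exists_conforms_sub_smul {x w : Fin n → ℝ} (hw : w ≠ 0) (hwx : supp w ⊂ supp x) :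
    ∃ t : ℝ, x - t • w ≠ 0 ∧ Conforms (x - t • w) x ∧ supp (x - t • w) ⊂ supp x := by
  have hT : (Finset.univ.filter fun j => w j ≠ 0).Nonempty := by
    obtain ⟨j, hj⟩ := Function.ne_iff.mp hw
    exact ⟨j, by simpa using hj⟩
  obtain ⟨j₀, hj₀, hmin⟩ := Finset.exists_min_image _ (fun j => |x j / w j|) hT
  simp only [Finset.mem_filter, Finset.mem_univ, true_and] at hj₀ hmin
  set t := x j₀ / w j₀
  have hle : ∀ j, |(t • w) j| ≤ |x j| := by
    intro j
    rcases eq_or_ne (w j) 0 with h | h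
    · simp [h]
    calc |(t • w) j| = |t| * |w j| := by simp [abs_mul]
      _ ≤ |x j / w j| * |w j| := mul_le_mul_of_nonneg_right (hmin j h) (abs_nonneg _)
      _ = |x j| := by rw [abs_div, div_mul_cancel₀ _ (abs_ne_zero.mpr h)]
  have hsupp : supp (t • w) ⊆ supp x := fun j h =>
    hwx.subset fun hw => h (by simp [hw])
  have hconf := conforms_sub_of_abs_le hsupp hle
  obtain ⟨j₁, hj₁x, hj₁w⟩ := Set.exists_of_ssubset hwx
  have hwj₁ : w j₁ = 0 := not_not.mp hj₁w
  refine ⟨t, fun h => hj₁x ?_, hconf, ?_⟩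
  · simpa [hwj₁] using congrFun h j₁
  · refine (Set.ssubset_iff_of_subset hconf.supp_subset).mpr ⟨j₀, hwx.subset hj₀, ?_⟩
    simp [supp, t, div_mul_cancel₀ _ hj₀]

lemma exists_isElementary_conforms {x : Fin n → ℝ} (hx : x ∈ V) (hx0 : x ≠ 0) :
    ∃ y, IsElementary V y ∧ Conforms y x := by
  induction hN : (supp x).ncard using Nat.strong_induction_on generalizing x with
  | _ N ih =>
  by_cases hel : IsElementary V x
  · exact ⟨x, hel, conforms_refl x⟩
  obtain ⟨w, hwV, hw0, hwx⟩ : ∃ w ∈ V, w ≠ 0 ∧ supp w ⊂ supp x := by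
    simpa [IsElementary, hx, hx0] using hel
  obtain ⟨t, hne, hconf, hss⟩ := exists_conforms_sub_smul hw0 hwx
  obtain ⟨y, hy, hyx⟩ :=
    ih _ (hN ▸ Set.ncard_lt_ncard hss) (V.sub_mem hx (V.smul_mem t hwV)) hne rfl
  exact ⟨y, hy, hyx.trans hconf⟩

end Elementary

section Primitive

variable {V : Submodule ℝ (Fin n → ℝ)}

lemma IsPrimitive.apply_eq {p : Fin n → ℝ} (hp : IsPrimitive V p) (j : Fin n) :
    p j = -1 ∨ p j = 0 ∨ p j = 1 := by
  simpa using hp.2 j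

lemma IsPrimitive.exists_int_eq {p : Fin n → ℝ} (hp : IsPrimitive V p) (j : Fin n) :
    ∃ z : ℤ, p j = z := by
  rcases hp.apply_eq j with h | h | h
  exacts [⟨-1, by simp [h]⟩, ⟨0, by simp [h]⟩, ⟨1, by simp [h]⟩]

lemma IsPrimitive.abs_apply_eq_one {p : Fin n → ℝ} (hp : IsPrimitive V p) {j : Fin n}
    (hj : p j ≠ 0) : |p j| = 1 := by
  rcases hp.apply_eq j with h | h | h <;> simp_all

lemma IsPrimitive.one_le_onorm {p : Fin n → ℝ} (hp : IsPrimitive V p) : 1 ≤ onorm p := by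
  obtain ⟨j, hj⟩ : ∃ j, p j ≠ 0 := Function.ne_iff.mp hp.1.2.1
  calc (1 : ℝ) = |p j| := (hp.abs_apply_eq_one hj).symm
    _ ≤ onorm p := Finset.single_le_sum (fun j _ => abs_nonneg (p j)) (Finset.mem_univ j)

/-- Cramer's rule: `|y j₀|⁻¹ • y` is the unique solution of `B z = sign (y j₀) • e_{j₀}`, where
the totally unimodular `B` stacks the rows of `A`, the unit rows outside the support of `y` and the
unit row of `j₀`. -/
lemma IsElementary.exists_isPrimitive_conforms (hV : IsRegularSpace V) {y : Fin n → ℝ}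
    (hy : IsElementary V y) : ∃ p, IsPrimitive V p ∧ Conforms p y := by
  obtain ⟨m, A, hA, rfl⟩ := hV
  obtain ⟨j₀, hj₀⟩ : ∃ j, y j ≠ 0 := Function.ne_iff.mp hy.2.1
  let B : Matrix (Fin m ⊕ {j // y j = 0 ∨ j = j₀}) (Fin n) ℝ :=
    (fromRows A 1).submatrix (Sum.map id Subtype.val) id
  have hB : B.IsTotallyUnimodular :=
    ((fromRows_one_isTotallyUnimodular_iff A).mpr hA).submatrix _ _
  have hBv : ∀ v, B *ᵥ v = Sum.elim (A *ᵥ v) fun j => v j.1 := by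
    intro v
    ext (q | j) <;> simp [B, mulVec, dotProduct, one_apply]
  have hker : ∀ v, B *ᵥ v = 0 → v = 0 := by
    intro v hv
    rw [hBv] at hv
    have hvV : v ∈ LinearMap.ker A.mulVecLin := funext fun q => congrFun hv (Sum.inl q)
    obtain ⟨t, rfl⟩ := hy.exists_eq_smul hvV fun j hvj hyj =>
      hvj (congrFun hv (Sum.inr ⟨j, Or.inl hyj⟩))
    have ht : t * y j₀ = 0 := congrFun hv (Sum.inr ⟨j₀, Or.inr rfl⟩)
    simp [(mul_eq_zero.mp ht).resolve_right hj₀]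
  have hinj : Function.Injective B.mulVec := fun v w h =>
    sub_eq_zero.mp (hker _ (by rw [mulVec_sub, h, sub_self]))
  have hpos : 0 < |y j₀|⁻¹ := inv_pos.mpr (abs_pos.mpr hj₀)
  have hAy : A *ᵥ y = 0 := hy.1
  have hBp : B *ᵥ (|y j₀|⁻¹ • y) =
      Pi.single (Sum.inr ⟨j₀, Or.inr rfl⟩) (SignType.sign (y j₀) : ℝ) := by
    rw [hBv]
    ext (q | ⟨j, hj | rfl⟩)
    · simp [mulVec_smul, hAy]
    · have : j ≠ j₀ := by rintro rfl; exact hj₀ hj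
      simp [hj, this]
    · rcases lt_or_gt_of_ne hj₀ with h | h <;> simp [abs_of_neg, abs_of_pos, h, hj₀]
  refine ⟨|y j₀|⁻¹ • y, ⟨hy.smul hpos.ne', fun j => ?_⟩, conforms_smul_left hpos y⟩
  obtain ⟨s, hs⟩ := hB.apply_mem_of_mulVec_eq_single hinj ⟨_, rfl⟩ hBp j
  cases s <;> simp [← hs]

lemma exists_isPrimitive_conforms (hV : IsRegularSpace V) {x : Fin n → ℝ} (hx : x ∈ V)
    (hx0 : x ≠ 0) : ∃ p, IsPrimitive V p ∧ Conforms p x :=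
  let ⟨_, hy, hyx⟩ := exists_isElementary_conforms hx hx0
  let ⟨p, hp, hpy⟩ := hy.exists_isPrimitive_conforms hV
  ⟨p, hp, hpy.trans hyx⟩

lemma exists_sum_isPrimitive_conforms (hV : IsRegularSpace V) {x : Fin n → ℝ} (hx : x ∈ V)
    (hxZ : ∀ j, ∃ z : ℤ, x j = z) :
    ∃ (k : ℕ) (p : Fin k → Fin n → ℝ),
      (∀ i, IsPrimitive V (p i) ∧ Conforms (p i) x) ∧ ∑ i, p i = x := by
  obtain ⟨N, hN⟩ := exists_nat_gt (onorm x)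
  induction N generalizing x with
  | zero => exact absurd hN (by simpa using onorm_nonneg x)
  | succ N ih =>
    rcases eq_or_ne x 0 with rfl | hx0
    · exact ⟨0, Fin.elim0, Fin.rec0, by simp⟩
    obtain ⟨p, hp, hpx⟩ := exists_isPrimitive_conforms hV hx hx0
    have hle : ∀ j, |p j| ≤ |x j| := by
      intro j
      rcases eq_or_ne (p j) 0 with h | h
      · simp [h]
      obtain ⟨z, hz⟩ := hxZ j
      have hz0 : z ≠ 0 := by rintro rfl; exact hpx.supp_subset h (by simp [hz])
      rw [hp.abs_apply_eq_one h, hz, ← Int.cast_abs]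
      exact_mod_cast Int.one_le_abs hz0
    have hrest := conforms_sub_of_abs_le hpx.supp_subset hle
    have hxpZ : ∀ j, ∃ z : ℤ, (x - p) j = z := fun j =>
      let ⟨a, ha⟩ := hxZ j
      let ⟨b, hb⟩ := hp.exists_int_eq j
      ⟨a - b, by simp [ha, hb]⟩
    obtain ⟨k, q, hq, hsum⟩ := ih (V.sub_mem hx hp.1.1) hxpZ
      (by rw [hpx.onorm_sub hrest]; push_cast at hN; linarith [hp.one_le_onorm])
    refine ⟨k + 1, Fin.cons p q, Fin.cases ⟨hp, hpx⟩ fun i => ⟨(hq i).1, (hq i).2.trans hrest⟩, ?_⟩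
    rw [Fin.sum_cons, hsum, add_sub_cancel]

end Primitive

section Augmenting

open Filter Topology

variable {V : Submodule ℝ (Fin n → ℝ)} {c : Fin n → ℝ} {r : Fin n} {f : Fin n → ℝ}

lemma eventually_add_mul_le {a b d : ℝ} (had : a ≤ d) (hb : 0 < b → a < d) :
    ∀ᶠ ε in 𝓝[>] (0 : ℝ), a + ε * b ≤ d := by
  rcases le_or_gt b 0 with hb0 | hb0
  · filter_upwards [self_mem_nhdsWithin] with ε (hε : 0 < ε)
    nlinarith
  · have hlim : Tendsto (fun ε : ℝ => a + ε * b) (𝓝[>] 0) (𝓝 a) := by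
      have hcont : Continuous fun ε : ℝ => a + ε * b := by fun_prop
      exact (hcont.tendsto' 0 a (by simp)).mono_left nhdsWithin_le_nhds
    exact (hlim.eventually_lt_const (hb hb0)).mono fun _ h => h.le

lemma exists_feasible_add_smul_iff (hf : Feasible c r f) (R : Fin n → ℝ) :
    (∃ ε : ℝ, 0 < ε ∧ Feasible c r (f + ε • R)) ↔
      ∀ j, j ≠ r → (0 < R j → f j < c j) ∧ (R j < 0 → 0 < f j) := by
  constructor
  · rintro ⟨ε, hε, hfeas⟩ j hj
    obtain ⟨h0, hc⟩ := hfeas j hj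
    simp only [Pi.add_apply, Pi.smul_apply, smul_eq_mul] at h0 hc
    exact ⟨fun h => by nlinarith, fun h => by nlinarith⟩
  · intro h
    have hev : ∀ᶠ ε in 𝓝[>] (0 : ℝ), 0 < ε ∧ Feasible c r (f + ε • R) := by
      refine (eventually_mem_nhdsWithin).and (eventually_all.mpr fun j => ?_)
      by_cases hj : j = r
      · exact Eventually.of_forall fun _ h => absurd hj h
      have hup := eventually_add_mul_le (hf j hj).2 (h j hj).1
      have hlow := eventually_add_mul_le (a := -f j) (b := -R j) (d := 0)
        (by linarith [(hf j hj).1]) fun hR => by linarith [(h j hj).2 (by linarith)]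
      filter_upwards [hup, hlow] with ε hup hlow _
      simp only [Pi.add_apply, Pi.smul_apply, smul_eq_mul]
      constructor <;> linarith
    exact hev.exists

lemma augmenting_iff (hf : Feasible c r f) {R : Fin n → ℝ} :
    Augmenting V c r f R ↔
      IsRPath V r R ∧ ∀ j, j ≠ r → (0 < R j → f j < c j) ∧ (R j < 0 → 0 < f j) :=
  and_congr_right fun _ => exists_feasible_add_smul_iff hf R

lemma augmenting_of_conforms_add (hf : Feasible c r f) {P Q R : Fin n → ℝ} {ε : ℝ}
    (hP : Augmenting V c r f P) (hg : Feasible c r (f + ε • P))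
    (hQ : Augmenting V c r (f + ε • P) Q) (hR : IsRPath V r R) (hRPQ : Conforms R (P + Q)) :
    Augmenting V c r f R := by
  rw [augmenting_iff hf] at hP ⊢
  rw [augmenting_iff hg] at hQ
  refine ⟨hR, fun j hj => ⟨fun hRj => ?_, fun hRj => ?_⟩⟩
  · have hPQ : 0 < P j + Q j := by nlinarith [hRPQ j hRj.ne', Pi.add_apply P Q j]
    rcases hP.1.1.apply_eq j with hPj | hPj | hPj
    · rcases hQ.1.1.apply_eq j with hQj | hQj | hQj <;> linarith
    · simpa [hPj] using (hQ.2 j hj).1 (by linarith)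
    · exact (hP.2 j hj).1 (by linarith)
  · have hPQ : P j + Q j < 0 := by nlinarith [hRPQ j hRj.ne, Pi.add_apply P Q j]
    rcases hP.1.1.apply_eq j with hPj | hPj | hPj
    · exact (hP.2 j hj).2 (by linarith)
    · simpa [hPj] using (hQ.2 j hj).2 (by linarith)
    · rcases hQ.1.1.apply_eq j with hQj | hQj | hQj <;> linarith

lemma two_mul_onorm_le_onorm_add (hV : IsRegularSpace V) (hf : Feasible c r f)
    {P Q : Fin n → ℝ} {ε : ℝ} (hP : ShortestAug V c r f P) (hg : Feasible c r (f + ε • P))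
    (hQ : Augmenting V c r (f + ε • P) Q) : 2 * onorm P ≤ onorm (P + Q) := by
  have hPQr : (P + Q) r = 2 := by simp [hP.1.1.2, hQ.1.2]; norm_num
  obtain ⟨k, p, hp, hsum⟩ := exists_sum_isPrimitive_conforms hV
    (V.add_mem hP.1.1.1.1.1 hQ.1.1.1.1) fun j =>
      let ⟨a, ha⟩ := hP.1.1.1.exists_int_eq j
      let ⟨b, hb⟩ := hQ.1.1.exists_int_eq j
      ⟨a + b, by simp [ha, hb]⟩
  have hpr : ∀ i, onorm P * p i r ≤ onorm (p i) := by
    intro i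
    rcases (hp i).1.apply_eq r with h | h | h
    · have := (hp i).2 r (by simp [h])
      rw [h, hPQr] at this
      norm_num at this
    · simp [h, onorm_nonneg]
    · rw [h, mul_one]
      exact hP.2 _ (augmenting_of_conforms_add hf hP.1 hg hQ ⟨(hp i).1, h⟩ (hp i).2)
  calc 2 * onorm P = onorm P * ∑ i, p i r := by
        rw [← Finset.sum_apply, hsum, hPQr, mul_comm]
    _ = ∑ i, onorm P * p i r := Finset.mul_sum _ _ _
    _ ≤ ∑ i, onorm (p i) := Finset.sum_le_sum fun i _ => hpr i
    _ = onorm (P + Q) := by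
        rw [sum_onorm_of_conforms (hsum ▸ fun i => (hp i).2), hsum]

end Augmenting

theorem stmt12_general (V : Submodule ℝ (Fin n → ℝ)) (hV : IsRegularSpace V)
    (r : Fin n) (c : Fin n → ℝ)
    (f g P Q : Fin n → ℝ) (hf : Feasible c r f)
    (hP : ShortestAug V c r f P) (hg : MaxAug c r f P g)
    (hQ : ShortestAug V c r g Q) :
    onorm P < onorm Q ↔ ¬ ShortestAug V c r f Q := by
  obtain ⟨ε, -, rfl, hgf, -⟩ := hg
  have h2 := two_mul_onorm_le_onorm_add hV hf hP hgf hQ.1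
  have htri := onorm_add_le P Q
  have hle : onorm P ≤ onorm Q := by linarith
  refine ⟨fun hlt hQf => (hlt.trans_le (hQf.2 P hP.1)).false, fun hQf => ?_⟩
  refine hle.lt_of_ne fun heq => hQf ⟨?_, fun R hR => heq ▸ hP.2 R hR⟩
  exact augmenting_of_conforms_add hf hP.1 hgf hQ.1 hQ.1.1
    (conforms_add_of_onorm_add_eq (by linarith))

theorem stmt12 (V : Submodule ℝ (Fin n → ℝ)) (hV : IsRegularSpace V)
    (r : Fin n) (c : Fin n → ℝ) (hc : ∀ j, j ≠ r → 0 ≤ c j)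
    (f g P Q : Fin n → ℝ) (hfV : f ∈ V) (hf : Feasible c r f)
    (hP : ShortestAug V c r f P) (hg : MaxAug c r f P g)
    (hQ : ShortestAug V c r g Q) :
    onorm P < onorm Q ↔ ¬ ShortestAug V c r f Q :=
  stmt12_general V hV r c f g P Q hf hP hg hQ
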